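/- Let (M,Π) be a Poisson manifold, X a vector field, β > 0, and φ a faithful positive linear functional on C_c^∞(M) satisfying φ({f,g}) = β φ(g·X(f)) for all f,g ∈ C_c^∞(M). Then X is a Poisson vector field, i.e. X({f,h}) = {X(f),h} + {f,X(h)} for all f,h ∈ C_c^∞(M). -/
import Mathlib


/-- `A` plays the role of `C_c^∞(M)` for a Poisson manifold
`(M,Π)`: a non-unital commutative ordered algebra in which squares are
nonnegative and `w² = 0 → w = 0`.  The Poisson bracket is antisymmetric,
satisfies the Jacobi identity and the Leibniz rule.  If `φ` is a positive
faithful linear functional satisfying the `(X,β)`-KMS condition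
`φ({f,g}) = β φ(g · X f)` with `β > 0`, then `X` is a Poisson vector field:
`X({f,h}) = {X f, h} + {f, X h}`. -/
theorem faithful_kms_implies_X_poisson
    {A : Type*} [NonUnitalCommRing A] [PartialOrder A] [Module ℝ A]
    (bracket : A → A → A) (X : A → A) (β : ℝ) (hβ : 0 < β)
    (hanti : ∀ f g : A, bracket f g = - bracket g f)
    (hjacobi : ∀ f g h : A,
      bracket (bracket f g) h + bracket (bracket g h) f + bracket (bracket h f) g = 0)
    (hleib : ∀ f g h : A, bracket f (g * h) = g * bracket f h + h * bracket f g)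
    (hsq : ∀ w : A, 0 ≤ w * w)
    (hsqzero : ∀ w : A, w * w = 0 → w = 0)
    (φ : A →ₗ[ℝ] ℝ)
    (hpos : ∀ f : A, 0 ≤ f → 0 ≤ φ f)
    (hfaithful : ∀ f : A, 0 ≤ f → φ f = 0 → f = 0)
    (hKMS : ∀ f g : A, φ (bracket f g) = β * φ (g * X f)) :
    ∀ f h : A, X (bracket f h) = bracket (X f) h + bracket f (X h) := by
  have hstar : ∀ f g : A, φ (g * X f) = - φ (f * X g) := by
    intro f g
    have h1 := hKMS f g
    rw [hanti f g, map_neg, hKMS g f] at h1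
    have h2 : β * φ (g * X f) = β * (- φ (f * X g)) := by linarith
    exact mul_left_cancel₀ (ne_of_gt hβ) h2
  intro f h
  set D := X (bracket f h) - (bracket (X f) h + bracket f (X h)) with hD
  have key : ∀ g : A, φ (g * D) = 0 := by
    intro g
    have e : φ (bracket (bracket f h) g) + φ (bracket (bracket h g) f)
        + φ (bracket (bracket g f) h) = 0 := by
      rw [← map_add, ← map_add, hjacobi f h g, map_zero]
    have k1 := hKMS (bracket f h) g
    have k2 := hKMS (bracket h g) f
    have k3 := hKMS (bracket g f) h
    rw [hstar (bracket h g) f] at k2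
    rw [hstar (bracket g f) h] at k3
    have t1 : β * φ (g * X (bracket f h))
        = β * φ (bracket h g * X f) + β * φ (bracket g f * X h) := by
      linear_combination e - k1 - k2 - k3
    have t1' : φ (g * X (bracket f h))
        = φ (bracket h g * X f) + φ (bracket g f * X h) := by
      have : β * φ (g * X (bracket f h))
          = β * (φ (bracket h g * X f) + φ (bracket g f * X h)) := by linarith
      exact mul_left_cancel₀ (ne_of_gt hβ) this
    have a2 : g * bracket (X f) h = X f * bracket h g - bracket h (g * X f) := by
      rw [hanti (X f) h, hleib h g (X f), mul_neg]; abel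
    have t2 : φ (g * bracket (X f) h)
        = φ (X f * bracket h g) - β * φ ((g * X f) * X h) := by
      rw [a2, map_sub, hKMS h (g * X f)]
    have a3 : g * bracket f (X h) = bracket f (g * X h) - X h * bracket f g := by
      rw [hleib f g (X h)]; abel
    have t3 : φ (g * bracket f (X h))
        = β * φ ((g * X h) * X f) - φ (X h * bracket f g) := by
      rw [a3, map_sub, hKMS f (g * X h)]
    have c1 : φ (X f * bracket h g) = φ (bracket h g * X f) := by rw [mul_comm]
    have c2 : φ (X h * bracket f g) = - φ (bracket g f * X h) := by
      rw [hanti f g, mul_neg, map_neg, mul_comm]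
    have c3 : φ ((g * X f) * X h) = φ ((g * X h) * X f) := by rw [mul_right_comm]
    have expand : φ (g * D) = φ (g * X (bracket f h)) - φ (g * bracket (X f) h)
        - φ (g * bracket f (X h)) := by
      have : g * D = g * X (bracket f h) - g * bracket (X f) h - g * bracket f (X h) := by
        rw [hD, mul_sub, mul_add, ← sub_sub]
      rw [this, map_sub, map_sub]
    rw [expand]
    linear_combination t1' - t2 - t3 - c1 + c2 + β * c3
  have hD0 : D = 0 := hsqzero D (hfaithful (D * D) (hsq D) (key D))
  have : X (bracket f h) - (bracket (X f) h + bracket f (X h)) = 0 := hD ▸ hD0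
  exact sub_eq_zero.mp this
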